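/- arXiv:2102.00476 — 5 statements merged into one kernel-verified Lean document; each statement's English description precedes it below -/
import Mathlib

section
/- For every integer n ≥ 1, the Grundy value of the GA1 position given by the constant bit string of length n (a single run of length n) equals the single-heap Kayles Grundy value K(n−1). -/
/-- The minimum excludant of a set of naturals. -/
noncomputable def mex (S : Set ℕ) : ℕ := sInf {n : ℕ | n ∉ S}

/-- The entropy of a bit string: the number of adjacent pairs of unequal bits. -/
def entropy (b : List Bool) : ℕ := (b.zip b.tail).countP fun p => p.1 != p.2

/-- Crossover at position `k` (1-indexed): flip bits `b₁,…,b_k`. -/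
def ga1Crossover (k : ℕ) (b : List Bool) : List Bool := (b.take k).map (! ·) ++ b.drop k

/-- Mutation at (0-indexed) position `i`: flip bit `i`. -/
def ga1Mutate (i : ℕ) (b : List Bool) : List Bool := b.set i (!(b.getD i false))

/-- The legal moves of GA1: a crossover or a mutation that strictly increases entropy. -/
def ga1Move (b b' : List Bool) : Prop :=
  ((∃ k, 1 ≤ k ∧ k ≤ b.length - 1 ∧ b' = ga1Crossover k b) ∨
    (∃ i, i < b.length ∧ b' = ga1Mutate i b)) ∧
  entropy b < entropy b'

/-!
A GA1 position matters only through its list of changes `cᵢ = (bᵢ ≠ bᵢ₊₁)`, whose number of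
`true`s is the entropy. A crossover at `k` negates `c_{k-1}` and a mutation negates the one or
two changes next to the flipped bit; since the entropy must grow, a move on the change list turns
one `false`, or two adjacent `false`s, into `true`. This is Kayles with the maximal runs of
`false` as heaps, so by the Sprague–Grundy sum rule the Grundy value is the nim-sum of `K` over
the run lengths. The constant string of length `n` has a single run of `n - 1` entries `false`.
-/

theorem mex_eq_of_forall {S : Set ℕ} {x : ℕ} (hx : x ∉ S) (h : ∀ y < x, y ∈ S) : mex S = x :=
  le_antisymm (Nat.sInf_le hx) <| not_lt.mp fun hlt =>
    Nat.sInf_mem (s := {n | n ∉ S}) ⟨x, hx⟩ (h _ hlt)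

theorem mem_of_lt_mex {S : Set ℕ} {y : ℕ} (h : y < mex S) : y ∈ S :=
  not_not.mp fun hy => (Nat.sInf_le hy).not_gt h

theorem mex_notMem {S : Set ℕ} (hS : S.Finite) : mex S ∉ S :=
  Nat.sInf_mem (s := {n | n ∉ S}) hS.infinite_compl.nonempty

theorem mex_image_xor_union {S T : Set ℕ} (hS : S.Finite) (hT : T.Finite) :
    mex ((· ^^^ mex T) '' S ∪ (mex S ^^^ ·) '' T) = mex S ^^^ mex T := by
  apply mex_eq_of_forall
  · rintro (⟨a, ha, hxor⟩ | ⟨b, hb, hxor⟩)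
    · exact mex_notMem hS (by simp_all)
    · exact mex_notMem hT (by simp_all)
  · intro y hy
    rcases Nat.lt_xor_cases hy with h | h
    · exact Or.inl ⟨_, mem_of_lt_mex h, by simp⟩
    · exact Or.inr ⟨_, mem_of_lt_mex h, by simp⟩

theorem List.exists_eq_append_cons_of_lt {α : Type*} {l : List α} {i : ℕ} (hi : i < l.length) :
    ∃ s a q, l = s ++ a :: q ∧ s.length = i :=
  ⟨l.take i, l[i], l.drop (i + 1), by simp, by simp; omega⟩

def KaylesMove (d d' : List Bool) : Prop :=
  ∃ u v, (d = u ++ false :: v ∧ d' = u ++ true :: v) ∨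
    (d = u ++ false :: false :: v ∧ d' = u ++ true :: true :: v)

namespace KaylesMove

theorem length_eq {d d' : List Bool} (h : KaylesMove d d') : d'.length = d.length := by
  obtain ⟨u, v, ⟨rfl, rfl⟩ | ⟨rfl, rfl⟩⟩ := h <;> simp

theorem count_false_lt {d d' : List Bool} (h : KaylesMove d d') :
    d'.count false < d.count false := by
  obtain ⟨u, v, ⟨rfl, rfl⟩ | ⟨rfl, rfl⟩⟩ := h <;> simp

theorem append_right {u u' : List Bool} (h : KaylesMove u u') (w : List Bool) :
    KaylesMove (u ++ w) (u' ++ w) := by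
  obtain ⟨s, t, ⟨rfl, rfl⟩ | ⟨rfl, rfl⟩⟩ := h
  · exact ⟨s, t ++ w, Or.inl (by simp)⟩
  · exact ⟨s, t ++ w, Or.inr (by simp)⟩

theorem append_left {v v' : List Bool} (h : KaylesMove v v') (w : List Bool) :
    KaylesMove (w ++ v) (w ++ v') := by
  obtain ⟨s, t, ⟨rfl, rfl⟩ | ⟨rfl, rfl⟩⟩ := h
  · exact ⟨w ++ s, t, Or.inl (by simp)⟩
  · exact ⟨w ++ s, t, Or.inr (by simp)⟩

end KaylesMove

theorem kaylesMove_append_true_iff {u v d' : List Bool} :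
    KaylesMove (u ++ true :: v) d' ↔
      (∃ u', KaylesMove u u' ∧ d' = u' ++ true :: v) ∨
        (∃ v', KaylesMove v v' ∧ d' = u ++ true :: v') := by
  constructor
  · rintro ⟨s, t, ⟨h, rfl⟩ | ⟨h, rfl⟩⟩ <;>
      simp only [List.append_eq_append_iff, List.cons_eq_append_iff] at h
    · rcases h with ⟨as, rfl, h⟩ | ⟨bs, rfl, h⟩
      · rcases as with _ | ⟨a, as⟩ <;> simp at h
        obtain ⟨rfl, rfl⟩ := h
        exact Or.inr ⟨as ++ true :: t, ⟨as, t, Or.inl ⟨rfl, rfl⟩⟩, by simp⟩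
      · rcases bs with _ | ⟨a, bs⟩ <;> simp at h
        obtain ⟨rfl, rfl⟩ := h
        exact Or.inl ⟨s ++ true :: bs, ⟨s, bs, Or.inl ⟨rfl, rfl⟩⟩, by simp⟩
    · rcases h with ⟨as, rfl, h⟩ | ⟨bs, rfl, h⟩
      · rcases as with _ | ⟨a, as⟩ <;> simp at h
        obtain ⟨rfl, rfl⟩ := h
        exact Or.inr ⟨as ++ true :: true :: t, ⟨as, t, Or.inr ⟨rfl, rfl⟩⟩, by simp⟩
      · rcases bs with _ | ⟨a, _ | ⟨b, bs⟩⟩ <;> simp at h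
        obtain ⟨rfl, rfl, rfl⟩ := h
        exact Or.inl ⟨s ++ true :: true :: bs, ⟨s, bs, Or.inr ⟨rfl, rfl⟩⟩, by simp⟩
  · rintro (⟨u', h, rfl⟩ | ⟨v', h, rfl⟩)
    · exact h.append_right _
    · simpa using h.append_left (u ++ [true])

section Kayles

variable (K : ℕ → ℕ)

/-- `kaylesValue K a d` is the nim-sum of `K` over the lengths of the maximal runs of `false`
in `d`, where `a` entries `false` are already counted towards the first run. -/
def kaylesValue : ℕ → List Bool → ℕ
  | a, [] => K a
  | a, false :: d => kaylesValue (a + 1) d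
  | a, true :: d => K a ^^^ kaylesValue 0 d

theorem kaylesValue_append_true (a : ℕ) (u v : List Bool) :
    kaylesValue K a (u ++ true :: v) = kaylesValue K a u ^^^ kaylesValue K 0 v := by
  induction u generalizing a with
  | nil => rfl
  | cons x u ih => cases x <;> simp [kaylesValue, ih, Nat.xor_assoc]

theorem kaylesValue_replicate (a n : ℕ) :
    kaylesValue K a (List.replicate n false) = K (a + n) := by
  induction n generalizing a with
  | zero => rfl
  | succ n ih => simp [List.replicate_succ, kaylesValue, ih, Nat.add_right_comm, Nat.add_assoc]

def rowOptions (n : ℕ) : Set ℕ := {m | ∃ a c, (a + c + 1 = n ∨ a + c + 2 = n) ∧ m = K a ^^^ K c}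

def kaylesOptions (d : List Bool) : Set ℕ := {m | ∃ d', KaylesMove d d' ∧ m = kaylesValue K 0 d'}

theorem kaylesOptions_finite (d : List Bool) : (kaylesOptions K d).Finite :=
  ((List.finite_length_eq Bool d.length).image (kaylesValue K 0)).subset <| by
    rintro _ ⟨d', h, rfl⟩
    exact ⟨d', h.length_eq, rfl⟩

theorem kaylesOptions_append_true (u v : List Bool) :
    kaylesOptions K (u ++ true :: v) =
      (· ^^^ kaylesValue K 0 v) '' kaylesOptions K u ∪
        (kaylesValue K 0 u ^^^ ·) '' kaylesOptions K v := by
  ext m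
  simp only [kaylesOptions, kaylesMove_append_true_iff, Set.mem_union, Set.mem_image,
    Set.mem_ofPred_eq]
  constructor
  · rintro ⟨_, ⟨u', h, rfl⟩ | ⟨v', h, rfl⟩, rfl⟩
    · exact Or.inl ⟨_, ⟨u', h, rfl⟩, (kaylesValue_append_true K 0 u' v).symm⟩
    · exact Or.inr ⟨_, ⟨v', h, rfl⟩, (kaylesValue_append_true K 0 u v').symm⟩
  · rintro (⟨_, ⟨u', h, rfl⟩, rfl⟩ | ⟨_, ⟨v', h, rfl⟩, rfl⟩)
    · exact ⟨_, Or.inl ⟨u', h, rfl⟩, (kaylesValue_append_true K 0 u' v).symm⟩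
    · exact ⟨_, Or.inr ⟨v', h, rfl⟩, (kaylesValue_append_true K 0 u v').symm⟩

theorem kaylesOptions_replicate (hK0 : K 0 = 0) (n : ℕ) :
    kaylesOptions K (List.replicate n false) = rowOptions K n := by
  ext m
  constructor
  · rintro ⟨_, ⟨u, v, ⟨h, rfl⟩ | ⟨h, rfl⟩⟩, rfl⟩ <;>
      obtain ⟨hlen, hu, hv⟩ := List.append_eq_replicate_iff.mp h.symm <;>
      simp only [List.length_cons, List.replicate_succ, List.cons.injEq, true_and] at hlen hv <;>
      rw [hu, hv, kaylesValue_append_true, kaylesValue_replicate]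
    · exact ⟨u.length, v.length, Or.inl (by omega), by simp [kaylesValue_replicate]⟩
    · exact ⟨u.length, v.length, Or.inr (by omega),
        by simp [kaylesValue, kaylesValue_replicate, hK0]⟩
  · rintro ⟨a, c, h | h, rfl⟩
    · refine ⟨_, ⟨List.replicate a false, List.replicate c false, Or.inl ⟨?_, rfl⟩⟩, ?_⟩
      · exact (List.eq_replicate_iff.mpr ⟨by simp; omega, by simp⟩).symm
      · simp [kaylesValue_append_true, kaylesValue_replicate]
    · refine ⟨_, ⟨List.replicate a false, List.replicate c false, Or.inr ⟨?_, rfl⟩⟩, ?_⟩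
      · exact (List.eq_replicate_iff.mpr ⟨by simp; omega, by simp⟩).symm
      · simp [kaylesValue, kaylesValue_append_true, kaylesValue_replicate, hK0]

end Kayles

theorem kaylesValue_eq_mex {K : ℕ → ℕ} (hK0 : K 0 = 0) (hK : ∀ n, K n = mex (rowOptions K n))
    (d : List Bool) : kaylesValue K 0 d = mex (kaylesOptions K d) := by
  induction h : d.length using Nat.strong_induction_on generalizing d with
  | _ n ih =>
  by_cases hd : true ∈ d
  · obtain ⟨u, v, rfl⟩ := List.append_of_mem hd
    have hu := ih u.length (by simp [← h]) u rfl
    have hv := ih v.length (by simp [← h]; omega) v rfl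
    rw [kaylesOptions_append_true, kaylesValue_append_true, hu, hv]
    exact (mex_image_xor_union (kaylesOptions_finite K u) (kaylesOptions_finite K v)).symm
  · obtain rfl : d = List.replicate n false :=
      List.eq_replicate_iff.mpr ⟨h, fun b hb => Bool.eq_false_iff.mpr (ne_of_mem_of_not_mem hb hd)⟩
    rw [kaylesOptions_replicate K hK0, kaylesValue_replicate, zero_add, hK]

theorem kayles_eq_mex_rowOptions {K : ℕ → ℕ} (hK0 : K 0 = 0) (hK1 : K 1 = 1)
    (hK : ∀ n, 2 ≤ n →
      K n = mex {m | ∃ a b : ℕ, (a + b = n - 1 ∨ a + b = n - 2) ∧ m = K a ^^^ K b})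
    (n : ℕ) : K n = mex (rowOptions K n) := by
  match n with
  | 0 => exact hK0.trans (mex_eq_of_forall (by simp [rowOptions]) (by simp)).symm
  | 1 =>
    refine hK1.trans (mex_eq_of_forall ?_ ?_).symm
    · rintro ⟨a, c, h | h, hm⟩
      · simp_all [show a = 0 ∧ c = 0 by omega]
      · omega
    · intro y hy
      exact ⟨0, 0, Or.inl rfl, by simp [hK0]; omega⟩
  | n + 2 =>
    rw [hK (n + 2) le_add_self]
    congr 1
    ext m
    simp only [rowOptions, Set.mem_ofPred_eq]
    grind

def FlipMove (d d' : List Bool) : Prop :=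
  (∃ u x v, d = u ++ x :: v ∧ d' = u ++ (!x) :: v) ∨
    ∃ u x y v, d = u ++ x :: y :: v ∧ d' = u ++ (!x) :: (!y) :: v

theorem kaylesMove_iff_flipMove {d d' : List Bool} :
    KaylesMove d d' ↔ FlipMove d d' ∧ d.count true < d'.count true := by
  constructor
  · rintro ⟨u, v, ⟨rfl, rfl⟩ | ⟨rfl, rfl⟩⟩
    · exact ⟨Or.inl ⟨u, false, v, rfl, rfl⟩, by simp⟩
    · exact ⟨Or.inr ⟨u, false, false, v, rfl, rfl⟩, by simp⟩
  · rintro ⟨⟨u, x, v, rfl, rfl⟩ | ⟨u, x, y, v, rfl, rfl⟩, hcount⟩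
    · cases x
      · exact ⟨u, v, Or.inl ⟨rfl, rfl⟩⟩
      · simp at hcount
    · cases x <;> cases y
      · exact ⟨u, v, Or.inr ⟨rfl, rfl⟩⟩
      all_goals simp at hcount <;> omega

def changes (b : List Bool) : List Bool := (b.zip b.tail).map fun p => p.1 != p.2

@[simp] theorem changes_singleton (a : Bool) : changes [a] = [] := rfl

@[simp] theorem changes_cons_cons (a c : Bool) (q : List Bool) :
    changes (a :: c :: q) = (a != c) :: changes (c :: q) := rfl

theorem length_changes (b : List Bool) : (changes b).length = b.length - 1 := by
  simp [changes]

theorem entropy_eq_count_changes (b : List Bool) : entropy b = (changes b).count true := by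
  simp [entropy, changes, List.count, List.countP_map]
  rfl

theorem changes_map_not (b : List Bool) : changes (b.map not) = changes b := by
  induction b with
  | nil => rfl
  | cons a b ih => rcases b with _ | ⟨c, b⟩ <;> simp_all

theorem changes_append_cons_cons (s : List Bool) (a c : Bool) (q : List Bool) :
    changes (s ++ a :: c :: q) = changes (s ++ [a]) ++ (a != c) :: changes (c :: q) := by
  induction s with
  | nil => rfl
  | cons x s ih => rcases s with _ | ⟨y, s⟩ <;> simp_all

theorem changes_replicate (n : ℕ) (c : Bool) :
    changes (List.replicate n c) = List.replicate (n - 1) false := by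
  induction n with
  | zero => rfl
  | succ n ih => rcases n with _ | n <;> simp_all [List.replicate_succ]

theorem ga1Crossover_append (s : List Bool) (a c : Bool) (q : List Bool) :
    ga1Crossover (s.length + 1) (s ++ a :: c :: q) = s.map not ++ (!a) :: c :: q := by
  rw [show s ++ a :: c :: q = (s ++ [a]) ++ c :: q by simp, ga1Crossover,
    show s.length + 1 = (s ++ [a]).length by simp, List.take_left, List.drop_left]
  simp

theorem ga1Mutate_append (s : List Bool) (a : Bool) (q : List Bool) :
    ga1Mutate s.length (s ++ a :: q) = s ++ (!a) :: q := by
  simp [ga1Mutate]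

theorem changes_ga1Crossover_append (s : List Bool) (a c : Bool) (q : List Bool) :
    changes (ga1Crossover (s.length + 1) (s ++ a :: c :: q)) =
      changes (s ++ [a]) ++ (!(a != c)) :: changes (c :: q) := by
  have hflip : changes (s.map not ++ [!a]) = changes (s ++ [a]) := by
    simpa using changes_map_not (s ++ [a])
  rw [ga1Crossover_append, changes_append_cons_cons, hflip]
  simp

theorem flipMove_changes_ga1Crossover {k : ℕ} {b : List Bool} (hk1 : 1 ≤ k)
    (hk : k ≤ b.length - 1) : FlipMove (changes b) (changes (ga1Crossover k b)) := by
  obtain ⟨s, a, q, rfl, hs⟩ := List.exists_eq_append_cons_of_lt (l := b) (i := k - 1) (by omega)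
  rcases q with _ | ⟨c, q⟩
  · simp at hk; omega
  obtain rfl : k = s.length + 1 := by omega
  exact Or.inl ⟨_, _, _, changes_append_cons_cons .., changes_ga1Crossover_append ..⟩

theorem flipMove_changes_ga1Mutate {i : ℕ} {b : List Bool} (hb : 2 ≤ b.length)
    (hi : i < b.length) : FlipMove (changes b) (changes (ga1Mutate i b)) := by
  obtain ⟨s, a, q, rfl, rfl⟩ := List.exists_eq_append_cons_of_lt hi
  rw [ga1Mutate_append]
  rcases List.eq_nil_or_concat' s with rfl | ⟨s, z, rfl⟩ <;> rcases q with _ | ⟨c, q⟩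
  · simp at hb
  · exact Or.inl ⟨[], a != c, changes (c :: q), by simp, by simp⟩
  · exact Or.inl ⟨changes (s ++ [z]), z != a, [], by simp [changes_append_cons_cons],
      by simp [changes_append_cons_cons]⟩
  · exact Or.inr ⟨changes (s ++ [z]), z != a, a != c, changes (c :: q),
      by simp [changes_append_cons_cons], by simp [changes_append_cons_cons]⟩

theorem exists_of_changes_eq_append_cons {b u v : List Bool} {x : Bool}
    (h : changes b = u ++ x :: v) :
    ∃ s a c q, b = s ++ a :: c :: q ∧ u = changes (s ++ [a]) ∧ x = (a != c) ∧
      v = changes (c :: q) := by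
  have hlen := congrArg List.length h
  simp only [length_changes, List.length_append, List.length_cons] at hlen
  obtain ⟨s, a, q, rfl, hs⟩ := List.exists_eq_append_cons_of_lt (l := b) (i := u.length) (by omega)
  rcases q with _ | ⟨c, q⟩
  · simp at hlen; omega
  rw [changes_append_cons_cons] at h
  obtain ⟨hu, hxv⟩ := List.append_inj h (by simp [length_changes, hs])
  simp only [List.cons.injEq] at hxv
  exact ⟨s, a, c, q, rfl, hu.symm, hxv.1.symm, hxv.2.symm⟩

theorem kaylesMove_changes_of_ga1Move {b b' : List Bool} (h : ga1Move b b') :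
    KaylesMove (changes b) (changes b') := by
  obtain ⟨hstep, hent⟩ := h
  rw [entropy_eq_count_changes, entropy_eq_count_changes] at hent
  refine kaylesMove_iff_flipMove.mpr ⟨?_, hent⟩
  rcases hstep with ⟨k, hk1, hk, rfl⟩ | ⟨i, hi, rfl⟩
  · exact flipMove_changes_ga1Crossover hk1 hk
  · refine flipMove_changes_ga1Mutate (not_lt.mp fun hb => ?_) hi
    have hnil : changes (ga1Mutate i b) = [] :=
      List.length_eq_zero_iff.mp (by simp [length_changes, ga1Mutate]; omega)
    simp [hnil] at hent

theorem exists_ga1Move_of_kaylesMove {b d' : List Bool} (h : KaylesMove (changes b) d') :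
    ∃ b', ga1Move b b' ∧ changes b' = d' := by
  obtain ⟨hflip, hcount⟩ := kaylesMove_iff_flipMove.mp h
  suffices ∃ b', ((∃ k, 1 ≤ k ∧ k ≤ b.length - 1 ∧ b' = ga1Crossover k b) ∨
      (∃ i, i < b.length ∧ b' = ga1Mutate i b)) ∧ changes b' = d' by
    obtain ⟨b', hstep, rfl⟩ := this
    exact ⟨b', ⟨hstep, by simpa only [entropy_eq_count_changes] using hcount⟩, rfl⟩
  rcases hflip with ⟨u, x, v, hb, rfl⟩ | ⟨u, x, y, v, hb, rfl⟩
  · obtain ⟨s, a, c, q, rfl, rfl, rfl, rfl⟩ := exists_of_changes_eq_append_cons hb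
    exact ⟨_, Or.inl ⟨s.length + 1, by omega, by simp, rfl⟩, changes_ga1Crossover_append ..⟩
  · obtain ⟨s, z, a, q, rfl, rfl, rfl, hv⟩ := exists_of_changes_eq_append_cons hb
    rcases q with _ | ⟨c, q⟩
    · simp at hv
    simp only [changes_cons_cons, List.cons.injEq] at hv
    obtain ⟨rfl, rfl⟩ := hv
    refine ⟨_, Or.inr ⟨(s ++ [z]).length, by simp, rfl⟩, ?_⟩
    rw [show s ++ z :: a :: c :: q = (s ++ [z]) ++ a :: c :: q by simp, ga1Mutate_append]
    simp [changes_append_cons_cons]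

theorem ga1_grundy_eq_kaylesValue {g : List Bool → ℕ}
    (hg : ∀ b, g b = mex {m | ∃ b', ga1Move b b' ∧ m = g b'}) {K : ℕ → ℕ} (hK0 : K 0 = 0)
    (hK : ∀ n, K n = mex (rowOptions K n)) (b : List Bool) :
    g b = kaylesValue K 0 (changes b) := by
  induction h : (changes b).count false using Nat.strong_induction_on generalizing b with
  | _ n ih =>
  rw [hg, kaylesValue_eq_mex hK0 hK]
  congr 1
  ext m
  constructor
  · rintro ⟨b', hmove, rfl⟩
    have hk := kaylesMove_changes_of_ga1Move hmove
    exact ⟨changes b', hk, ih _ (h ▸ hk.count_false_lt) b' rfl⟩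
  · rintro ⟨d', hk, rfl⟩
    obtain ⟨b', hmove, rfl⟩ := exists_ga1Move_of_kaylesMove hk
    exact ⟨b', hmove, (ih _ (h ▸ hk.count_false_lt) b' rfl).symm⟩

theorem ga1_const_grundy_eq_kayles_general
    (g : List Bool → ℕ)
    (hg : ∀ b, g b = mex {m | ∃ b', ga1Move b b' ∧ m = g b'})
    (K : ℕ → ℕ)
    (hK0 : K 0 = 0) (hK1 : K 1 = 1)
    (hK : ∀ n, 2 ≤ n →
      K n = mex {m | ∃ a b : ℕ, (a + b = n - 1 ∨ a + b = n - 2) ∧ m = K a ^^^ K b})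
    (n : ℕ) (c : Bool) :
    g (List.replicate n c) = K (n - 1) := by
  rw [ga1_grundy_eq_kaylesValue hg hK0 (kayles_eq_mex_rowOptions hK0 hK1 hK), changes_replicate,
    kaylesValue_replicate, zero_add]

/-- For every `n ≥ 1`, the Grundy value of the GA1 position given by the
constant bit string of length `n` equals the single-heap Kayles Grundy value `K (n-1)`.
Here `g` is the GA1 Grundy function (characterized by the mex recurrence over legal moves)
and `K` is the single-heap Kayles Grundy function, characterized by `K 0 = 0`, `K 1 = 1`,
and `K n = mex { K a XOR K b : a + b ∈ {n-1, n-2} }` for `n ≥ 2`. -/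
theorem ga1_const_grundy_eq_kayles
    (g : List Bool → ℕ)
    (hg : ∀ b, g b = mex {m | ∃ b', ga1Move b b' ∧ m = g b'})
    (K : ℕ → ℕ)
    (hK0 : K 0 = 0) (hK1 : K 1 = 1)
    (hK : ∀ n, 2 ≤ n →
      K n = mex {m | ∃ a b : ℕ, (a + b = n - 1 ∨ a + b = n - 2) ∧ m = K a ^^^ K b})
    (n : ℕ) (hn : 1 ≤ n) (c : Bool) :
    g (List.replicate n c) = K (n - 1) :=
  ga1_const_grundy_eq_kayles_general g hg K hK0 hK1 hK n c
end

section
/- Runs of length 1 do not affect the Grundy value of GA1: if two bit strings have the property that their sequences of run lengths agree after deleting all entries equal to 1, then the two GA1 positions have the same Grundy value. -/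
/-- Helper for computing run lengths: `cur` is the current bit, `cnt` the length of the
current run so far. -/
def runLengthsAux (cur : Bool) (cnt : ℕ) : List Bool → List ℕ
  | [] => [cnt]
  | a :: rest => if a = cur then runLengthsAux cur (cnt + 1) rest
                 else cnt :: runLengthsAux a 1 rest

/-- The sequence of run lengths of a bit string (a run is a maximal constant sub-string). -/
def runLengths : List Bool → List ℕ
  | [] => []
  | a :: rest => runLengthsAux a 1 rest

/-!
Write a bit string through its first bit and its run lengths. A legal move must increase the
number of runs, so it cuts a single run of length `l ≥ 2` either in two (a crossover inside the
run, or a mutation at an end of the string) or in three with a singleton in the middle (a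
mutation inside the run), and each such cut is realized by a legal move. Singleton runs can
never be cut and a cut leaves the other runs alone, so having the same run lengths after
deleting the `1`s is a bisimulation of the game graph. Play terminates, hence bisimilar
positions have the same Grundy value.
-/

/-- Zero entries are allowed: an empty run makes its two neighbours merge. -/
def ofRunLengths (c : Bool) : List ℕ → List Bool
  | [] => []
  | l :: L => List.replicate l c ++ ofRunLengths (!c) L

@[simp] lemma ofRunLengths_nil (c : Bool) : ofRunLengths c [] = [] := rfl

@[simp] lemma ofRunLengths_cons (c : Bool) (l : ℕ) (L : List ℕ) :
    ofRunLengths c (l :: L) = List.replicate l c ++ ofRunLengths (!c) L := rfl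

@[simp] lemma length_ofRunLengths (c : Bool) (L : List ℕ) :
    (ofRunLengths c L).length = L.sum := by
  induction L generalizing c <;> simp [*]

lemma ofRunLengths_zero_cons (c : Bool) (L : List ℕ) :
    ofRunLengths c (0 :: L) = ofRunLengths (!c) L := rfl

lemma ofRunLengths_append_zero (c : Bool) (L : List ℕ) :
    ofRunLengths c (L ++ [0]) = ofRunLengths c L := by
  induction L generalizing c <;> simp [*]

lemma ofRunLengths_merge (c : Bool) (P : List ℕ) (x y : ℕ) (S : List ℕ) :
    ofRunLengths c (P ++ x :: 0 :: y :: S) = ofRunLengths c (P ++ (x + y) :: S) := by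
  induction P generalizing c with
  | nil => simp [← List.append_assoc]
  | cons p P ih => simp [ih]

lemma runLengthsAux_replicate_append (c : Bool) (m n : ℕ) (t : List Bool) :
    runLengthsAux c m (List.replicate n c ++ t) = runLengthsAux c (m + n) t := by
  induction n generalizing m with
  | zero => rfl
  | succ n ih => simp [List.replicate_succ, runLengthsAux, ih, Nat.add_right_comm, Nat.add_assoc]

lemma zero_notMem_runLengthsAux (c : Bool) {m : ℕ} (hm : 0 < m) (t : List Bool) :
    0 ∉ runLengthsAux c m t := by
  induction t generalizing c m with
  | nil => simpa [runLengthsAux] using hm.ne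
  | cons a t ih =>
    unfold runLengthsAux
    split_ifs
    · exact ih c (by omega)
    · simpa [hm.ne] using ih a one_pos

lemma zero_notMem_runLengths (b : List Bool) : 0 ∉ runLengths b := by
  cases b with
  | nil => simp [runLengths]
  | cons a t => exact zero_notMem_runLengthsAux a one_pos t

lemma ofRunLengths_runLengthsAux (c : Bool) (m : ℕ) (t : List Bool) :
    ofRunLengths c (runLengthsAux c m t) = List.replicate m c ++ t := by
  induction t generalizing c m with
  | nil => simp [runLengthsAux]
  | cons a t ih =>
    unfold runLengthsAux
    split_ifs with h
    · simp [ih, h, List.replicate_succ']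
    · obtain rfl : a = !c := by cases a <;> cases c <;> simp_all
      simp [ih]

lemma exists_ofRunLengths_runLengths (b : List Bool) : ∃ c, ofRunLengths c (runLengths b) = b := by
  cases b with
  | nil => exact ⟨false, rfl⟩
  | cons a t => exact ⟨a, by simp [runLengths, ofRunLengths_runLengthsAux]⟩

lemma runLengthsAux_ofRunLengths {L : List ℕ} (hL : 0 ∉ L) (c : Bool) (m : ℕ) :
    runLengthsAux c m (ofRunLengths (!c) L) = m :: L := by
  induction L generalizing c m with
  | nil => rfl
  | cons l L ih =>
    obtain ⟨l, rfl⟩ : ∃ k, l = k + 1 := Nat.exists_eq_succ_of_ne_zero (by aesop)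
    simp only [ofRunLengths_cons, List.replicate_succ, List.cons_append, runLengthsAux,
      Bool.not_eq_self, if_false, runLengthsAux_replicate_append]
    rw [Nat.add_comm, ← Bool.not_not c, ih (by aesop)]

lemma runLengths_ofRunLengths {L : List ℕ} (hL : 0 ∉ L) (c : Bool) :
    runLengths (ofRunLengths c L) = L := by
  cases L with
  | nil => rfl
  | cons l L =>
    obtain ⟨l, rfl⟩ : ∃ k, l = k + 1 := Nat.exists_eq_succ_of_ne_zero (by aesop)
    rw [ofRunLengths_cons, List.replicate_succ, List.cons_append, runLengths,
      runLengthsAux_replicate_append, ← Bool.not_not c, runLengthsAux_ofRunLengths (by aesop),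
      Nat.add_comm]

@[simp] lemma entropy_nil : entropy [] = 0 := rfl

@[simp] lemma entropy_singleton (x : Bool) : entropy [x] = 0 := rfl

lemma entropy_cons_cons (x y : Bool) (t : List Bool) :
    entropy (x :: y :: t) = (if x = y then 0 else 1) + entropy (y :: t) := by
  by_cases h : x = y <;> simp [entropy, h, Nat.add_comm]

lemma entropy_le_length_sub_one (b : List Bool) : entropy b ≤ b.length - 1 := by
  simpa [entropy] using (b.zip b.tail).countP_le_length (p := fun p => p.1 != p.2)

lemma entropy_cons_le (x : Bool) (t : List Bool) : entropy (x :: t) ≤ entropy t + 1 := by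
  cases t with
  | nil => simp
  | cons y t => rw [entropy_cons_cons]; split_ifs <;> omega

lemma entropy_replicate_succ_append (n : ℕ) (c : Bool) (t : List Bool) :
    entropy (List.replicate (n + 1) c ++ t) = entropy (c :: t) := by
  induction n with
  | zero => rfl
  | succ n ih =>
    rw [List.replicate_succ, List.cons_append, ← ih, List.replicate_succ, List.cons_append,
      entropy_cons_cons, if_pos rfl, Nat.zero_add]

lemma entropy_add_one_eq_length_runLengthsAux (c : Bool) (m : ℕ) (t : List Bool) :
    entropy (c :: t) + 1 = (runLengthsAux c m t).length := by
  induction t generalizing c m with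
  | nil => simp [runLengthsAux]
  | cons a t ih =>
    rw [entropy_cons_cons, runLengthsAux]
    by_cases h : a = c
    · simp [h, ← ih c (m + 1)]
    · simp only [h, Ne.symm h, ↓reduceIte, List.length_cons, ← ih a 1]
      omega

lemma entropy_add_one_eq_length_runLengths {b : List Bool} (hb : b ≠ []) :
    entropy b + 1 = (runLengths b).length := by
  obtain ⟨a, t, rfl⟩ := List.exists_cons_of_ne_nil hb
  exact entropy_add_one_eq_length_runLengthsAux a 1 t

lemma entropy_ofRunLengths {L : List ℕ} (hL : 0 ∉ L) (hne : L ≠ []) (c : Bool) :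
    entropy (ofRunLengths c L) + 1 = L.length := by
  have hsum : ofRunLengths c L ≠ [] := by
    obtain ⟨l, L, rfl⟩ := List.exists_cons_of_ne_nil hne
    obtain ⟨l, rfl⟩ : ∃ k, l = k + 1 := Nat.exists_eq_succ_of_ne_zero (by aesop)
    simp [List.replicate_succ]
  rw [entropy_add_one_eq_length_runLengths hsum, runLengths_ofRunLengths hL]

/-- Each entry of `L` contributes at most one run, and an empty entry none. -/
lemma entropy_ofRunLengths_add_count_zero_lt {c : Bool} {L : List ℕ}
    (hne : ofRunLengths c L ≠ []) : entropy (ofRunLengths c L) + L.count 0 < L.length := by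
  induction L generalizing c with
  | nil => simp at hne
  | cons l L ih =>
    rcases Nat.eq_zero_or_pos l with rfl | hl
    · have := ih hne
      rw [ofRunLengths_zero_cons, List.count_cons_self, List.length_cons]
      omega
    obtain ⟨l, rfl⟩ := Nat.exists_eq_add_of_lt hl
    rw [ofRunLengths_cons, Nat.zero_add, entropy_replicate_succ_append,
      List.count_cons_of_ne (by omega), List.length_cons]
    by_cases hw : ofRunLengths (!c) L = []
    · have : L.count 0 ≤ L.length := List.count_le_length
      rw [hw, entropy_singleton]
      omega
    · have := ih hw
      have := entropy_cons_le c (ofRunLengths (!c) L)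
      omega

lemma entropy_ofRunLengths_lt_length {c : Bool} {L : List ℕ} (hne : ofRunLengths c L ≠ []) :
    entropy (ofRunLengths c L) < L.length :=
  (Nat.le_add_right _ _).trans_lt (entropy_ofRunLengths_add_count_zero_lt hne)

lemma zero_notMem_of_length_le_entropy_ofRunLengths {c : Bool} {L : List ℕ}
    (hne : ofRunLengths c L ≠ []) (h : L.length ≤ entropy (ofRunLengths c L) + 1) : 0 ∉ L := by
  have := entropy_ofRunLengths_add_count_zero_lt hne
  exact List.count_eq_zero.mp (by omega)

@[simp] lemma length_ga1Crossover (k : ℕ) (b : List Bool) :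
    (ga1Crossover k b).length = b.length := by
  simp only [ga1Crossover, List.length_append, List.length_map, List.length_take,
    List.length_drop]
  omega

@[simp] lemma length_ga1Mutate (i : ℕ) (b : List Bool) : (ga1Mutate i b).length = b.length := by
  simp [ga1Mutate]

lemma ga1Crossover_append_s2 (u t : List Bool) (k : ℕ) :
    ga1Crossover (u.length + k) (u ++ t) = u.map (! ·) ++ ga1Crossover k t := by
  simp [ga1Crossover, List.take_length_add_append, List.drop_length_add_append]

lemma ga1Mutate_append_s2 (u t : List Bool) (i : ℕ) :
    ga1Mutate (u.length + i) (u ++ t) = u ++ ga1Mutate i t := by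
  simp [ga1Mutate, List.getElem?_append_right]

@[simp] lemma ga1Crossover_zero (b : List Bool) : ga1Crossover 0 b = b := by
  simp [ga1Crossover]

@[simp] lemma ga1Mutate_zero_cons (x : Bool) (t : List Bool) :
    ga1Mutate 0 (x :: t) = (!x) :: t := rfl

lemma ga1Crossover_ofRunLengths (c : Bool) (P : List ℕ) (a r : ℕ) (S : List ℕ) :
    ga1Crossover (P.sum + a) (ofRunLengths c (P ++ (a + r) :: S)) =
      ofRunLengths (!c) (P ++ a :: r :: S) := by
  induction P generalizing c with
  | nil =>
    have h := ga1Crossover_append_s2 (List.replicate a c) (List.replicate r c ++ ofRunLengths (!c) S) 0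
    rw [List.length_replicate, Nat.add_zero, ga1Crossover_zero, ← List.append_assoc,
      List.replicate_append_replicate] at h
    simp only [List.nil_append, List.sum_nil, Nat.zero_add, ofRunLengths_cons, h,
      List.map_replicate, Bool.not_not]
  | cons p P ih =>
    have h := ga1Crossover_append_s2 (List.replicate p c) (ofRunLengths (!c) (P ++ (a + r) :: S))
      (P.sum + a)
    rw [List.length_replicate] at h
    rw [List.cons_append, ofRunLengths_cons, List.sum_cons, Nat.add_assoc, h, ih,
      List.cons_append, ofRunLengths_cons, List.map_replicate]

lemma ga1Mutate_ofRunLengths (c : Bool) (P : List ℕ) (a r : ℕ) (S : List ℕ) :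
    ga1Mutate (P.sum + a) (ofRunLengths c (P ++ (a + 1 + r) :: S)) =
      ofRunLengths c (P ++ a :: 1 :: r :: S) := by
  induction P generalizing c with
  | nil =>
    have h := ga1Mutate_append_s2 (List.replicate a c)
      (c :: (List.replicate r c ++ ofRunLengths (!c) S)) 0
    rw [List.length_replicate, Nat.add_zero, ga1Mutate_zero_cons] at h
    simp only [List.nil_append, List.sum_nil, Nat.zero_add, ofRunLengths_cons, List.replicate_add,
      List.replicate_one, List.append_assoc, List.cons_append,
      Bool.not_not, h]
  | cons p P ih =>
    have h := ga1Mutate_append_s2 (List.replicate p c) (ofRunLengths (!c) (P ++ (a + 1 + r) :: S))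
      (P.sum + a)
    rw [List.length_replicate] at h
    rw [List.cons_append, ofRunLengths_cons, List.sum_cons, Nat.add_assoc, h, ih,
      List.cons_append, ofRunLengths_cons]

lemma exists_eq_append_cons_of_lt_sum {L : List ℕ} {k : ℕ} (h : k < L.sum) :
    ∃ P a r S, L = P ++ (a + 1 + r) :: S ∧ k = P.sum + a := by
  induction L generalizing k with
  | nil => simp at h
  | cons l L ih =>
    by_cases hk : k < l
    · obtain ⟨r, rfl⟩ := Nat.exists_eq_add_of_lt hk
      exact ⟨[], k, r, L, by simp [Nat.add_right_comm], by simp⟩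
    · obtain ⟨P, a, r, S, rfl, hka⟩ := ih (k := k - l) (by rw [List.sum_cons] at h; omega)
      exact ⟨l :: P, a, r, S, rfl, by rw [List.sum_cons]; omega⟩

def RunSplit (l : ℕ) (M : List ℕ) : Prop :=
  (∃ a b, 0 < a ∧ 0 < b ∧ a + b = l ∧ M = [a, b]) ∨
    (∃ a b, 0 < a ∧ 0 < b ∧ a + 1 + b = l ∧ M = [a, 1, b])

def RunMove (L L' : List ℕ) : Prop :=
  ∃ P l S M, RunSplit l M ∧ L = P ++ l :: S ∧ L' = P ++ M ++ S

lemma exists_runMove_filter_eq {L₁ L₂ L₁' : List ℕ}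
    (hf : L₁.filter (· ≠ 1) = L₂.filter (· ≠ 1)) (h : RunMove L₁ L₁') :
    ∃ L₂', RunMove L₂ L₂' ∧ L₁'.filter (· ≠ 1) = L₂'.filter (· ≠ 1) := by
  obtain ⟨P, l, S, M, hsplit, rfl, rfl⟩ := h
  have hl : l ≠ 1 := by rcases hsplit with ⟨a, b, _, _, rfl, -⟩ | ⟨a, b, _, _, rfl, -⟩ <;> omega
  rw [List.filter_append, List.filter_cons_of_pos (by simpa), eq_comm,
    List.filter_eq_append_iff] at hf
  obtain ⟨P₂, T, rfl, hP, hT⟩ := hf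
  obtain ⟨Q, S₂, rfl, hQ, -, hS⟩ := List.filter_eq_cons_iff.mp hT
  refine ⟨P₂ ++ Q ++ M ++ S₂, ⟨P₂ ++ Q, l, S₂, M, hsplit, by simp, rfl⟩, ?_⟩
  simp only [List.filter_append, hP, hS, List.filter_eq_nil_iff.mpr hQ, List.nil_append,
    List.append_assoc]

lemma exists_ga1Move_of_runMove {L L' : List ℕ} (hL : 0 ∉ L) (h : RunMove L L') (c : Bool) :
    ∃ b', ga1Move (ofRunLengths c L) b' ∧ runLengths b' = L' := by
  obtain ⟨P, l, S, M, hsplit, rfl, rfl⟩ := h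
  have hE := entropy_ofRunLengths hL (by simp) c
  simp only [List.length_append, List.length_cons] at hE
  rcases hsplit with ⟨a, b, ha, hb, rfl, rfl⟩ | ⟨a, b, ha, hb, rfl, rfl⟩
  · have h0 : 0 ∉ P ++ a :: b :: S := by grind
    have hE' := entropy_ofRunLengths h0 (by simp) (!c)
    simp only [List.length_append, List.length_cons] at hE'
    refine ⟨_, ⟨Or.inl ⟨P.sum + a, by omega, ?_, (ga1Crossover_ofRunLengths c P a b S).symm⟩,
      by omega⟩, by simpa using runLengths_ofRunLengths h0 (!c)⟩
    simp only [length_ofRunLengths, List.sum_append, List.sum_cons]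
    omega
  · have h0 : 0 ∉ P ++ a :: 1 :: b :: S := by grind
    have hE' := entropy_ofRunLengths h0 (by simp) c
    simp only [List.length_append, List.length_cons] at hE'
    refine ⟨_, ⟨Or.inr ⟨P.sum + a, ?_, (ga1Mutate_ofRunLengths c P a b S).symm⟩, by omega⟩,
      by simpa using runLengths_ofRunLengths h0 c⟩
    simp only [length_ofRunLengths, List.sum_append, List.sum_cons]
    omega

section classification

variable {c : Bool} {L : List ℕ}

lemma runMove_of_ga1Crossover {k : ℕ} (hL : 0 ∉ L) (hk : k < L.sum)
    (hlt : entropy (ofRunLengths c L) < entropy (ga1Crossover k (ofRunLengths c L))) :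
    RunMove L (runLengths (ga1Crossover k (ofRunLengths c L))) := by
  obtain ⟨P, a, r, S, rfl, rfl⟩ := exists_eq_append_cons_of_lt_sum hk
  rw [Nat.add_assoc] at hL hlt ⊢
  rw [ga1Crossover_ofRunLengths] at hlt ⊢
  have hE := entropy_ofRunLengths hL (by simp) c
  have hne : ofRunLengths (!c) (P ++ a :: (1 + r) :: S) ≠ [] := by
    intro h; simp [h] at hlt
  have h0 := zero_notMem_of_length_le_entropy_ofRunLengths hne 
    (by simp only [List.length_append, List.length_cons] at hE ⊢; omega)
  rw [runLengths_ofRunLengths h0]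
  exact ⟨P, a + (1 + r), S, [a, 1 + r],
    Or.inl ⟨a, 1 + r, by grind, by omega, rfl, rfl⟩, rfl, by simp⟩

lemma runMove_of_ga1Mutate {i : ℕ} (hL : 0 ∉ L) (hi : i < L.sum)
    (hlt : entropy (ofRunLengths c L) < entropy (ga1Mutate i (ofRunLengths c L))) :
    RunMove L (runLengths (ga1Mutate i (ofRunLengths c L))) := by
  obtain ⟨P, a, r, S, rfl, rfl⟩ := exists_eq_append_cons_of_lt_sum hi
  have hE := entropy_ofRunLengths hL (by simp) c
  rw [ga1Mutate_ofRunLengths] at hlt ⊢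
  -- flipping a bit next to a neighbouring run merges it into that run, which loses entropy
  have no_merge {c' : Bool} {L' : List ℕ} (hlen : L'.length ≤ (P ++ (a + 1 + r) :: S).length)
      (heq : ofRunLengths c (P ++ a :: 1 :: r :: S) = ofRunLengths c' L') : False := by
    rw [heq] at hlt
    have := entropy_ofRunLengths_lt_length (c := c') (L := L') (by intro h; simp [h] at hlt)
    omega
  rcases Nat.eq_zero_or_pos a with rfl | ha
  · rcases P.eq_nil_or_concat with rfl | ⟨Q, p, rfl⟩
    · simp only [List.nil_append, ofRunLengths_zero_cons] at hlt hE ⊢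
      have hne : ofRunLengths (!c) (1 :: r :: S) ≠ [] := by simp
      have h0 := zero_notMem_of_length_le_entropy_ofRunLengths hne
        (by simp only [List.length_cons] at hE ⊢; omega)
      rw [runLengths_ofRunLengths h0]
      exact ⟨[], 0 + 1 + r, S, [1, r], Or.inl ⟨1, r, one_pos, by grind, by omega, rfl⟩, rfl, rfl⟩
    · exact (no_merge (L' := Q ++ (p + 1) :: r :: S) (by simp)
        (by simpa using ofRunLengths_merge c Q p 1 (r :: S))).elim
  · rcases Nat.eq_zero_or_pos r with rfl | hr
    · rcases S with _ | ⟨m, S⟩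
      · have h0 : 0 ∉ P ++ [a, 1] := by grind
        rw [show P ++ [a, 1, 0] = (P ++ [a, 1]) ++ [0] by simp, ofRunLengths_append_zero,
          runLengths_ofRunLengths h0]
        exact ⟨P, a + 1 + 0, [], [a, 1], Or.inl ⟨a, 1, ha, one_pos, rfl, rfl⟩, rfl, by simp⟩
      · exact (no_merge (L' := P ++ a :: (1 + m) :: S) (by simp)
          (by simpa using ofRunLengths_merge c (P ++ [a]) 1 m S)).elim
    · have h0 : 0 ∉ P ++ a :: 1 :: r :: S := by grind
      rw [runLengths_ofRunLengths h0]
      exact ⟨P, a + 1 + r, S, [a, 1, r], Or.inr ⟨a, r, ha, hr, rfl, rfl⟩, rfl, by simp⟩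

lemma runMove_of_ga1Move {b' : List Bool} (hL : 0 ∉ L) (h : ga1Move (ofRunLengths c L) b') :
    RunMove L (runLengths b') := by
  obtain ⟨⟨k, hk₁, hk, rfl⟩ | ⟨i, hi, rfl⟩, hlt⟩ := h
  · exact runMove_of_ga1Crossover hL (by rw [length_ofRunLengths] at hk; omega) hlt
  · exact runMove_of_ga1Mutate hL (by simpa using hi) hlt

end classification

theorem eq_of_mex_rec_of_bisimulation {α : Type*} {r : α → α → Prop}
    (hr : WellFounded (flip r)) {g : α → ℕ} (hg : ∀ x, g x = mex {m | ∃ y, r x y ∧ m = g y})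
    {R : α → α → Prop} (hR : ∀ ⦃x y⦄, R x y → R y x)
    (hsim : ∀ ⦃x y x'⦄, R x y → r x x' → ∃ y', r y y' ∧ R x' y') {x y : α} (hxy : R x y) :
    g x = g y := by
  induction x using hr.induction generalizing y with
  | _ x ih =>
    rw [hg x, hg y]
    congr 1
    ext m
    constructor
    · rintro ⟨x', hx', rfl⟩
      obtain ⟨y', hy', hR'⟩ := hsim hxy hx'
      exact ⟨y', hy', ih x' hx' hR'⟩
    · rintro ⟨y', hy', rfl⟩
      obtain ⟨x', hx', hR'⟩ := hsim (hR hxy) hy'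
      exact ⟨x', hx', (ih x' hx' (hR hR')).symm⟩

lemma length_sub_entropy_lt_of_ga1Move {b b' : List Bool} (h : ga1Move b b') :
    b'.length - entropy b' < b.length - entropy b := by
  obtain ⟨hmove, hlt⟩ := h
  have hlen : b'.length = b.length := by
    rcases hmove with ⟨k, -, -, rfl⟩ | ⟨i, -, rfl⟩ <;> simp
  have := entropy_le_length_sub_one b'
  omega

lemma ga1Move_wellFounded : WellFounded (flip ga1Move) :=
  Subrelation.wf (fun h ↦ length_sub_entropy_lt_of_ga1Move h)
    (InvImage.wf (fun b : List Bool ↦ b.length - entropy b) wellFounded_lt)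

lemma exists_ga1Move_filter_runLengths_eq {b₁ b₂ b₁' : List Bool}
    (h : (runLengths b₁).filter (· ≠ 1) = (runLengths b₂).filter (· ≠ 1))
    (hmove : ga1Move b₁ b₁') :
    ∃ b₂', ga1Move b₂ b₂' ∧ (runLengths b₁').filter (· ≠ 1) = (runLengths b₂').filter (· ≠ 1) := by
  obtain ⟨c₁, hc₁⟩ := exists_ofRunLengths_runLengths b₁
  obtain ⟨c₂, hc₂⟩ := exists_ofRunLengths_runLengths b₂
  rw [← hc₁] at hmove
  obtain ⟨L₂', hrun₂, hf⟩ :=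
    exists_runMove_filter_eq h (runMove_of_ga1Move (zero_notMem_runLengths b₁) hmove)
  obtain ⟨b₂', hmove₂, rfl⟩ := exists_ga1Move_of_runMove (zero_notMem_runLengths b₂) hrun₂ c₂
  exact ⟨b₂', hc₂ ▸ hmove₂, hf⟩

/-- Runs of length 1 do not affect the Grundy value of GA1: if two bit strings
have sequences of run lengths that agree after deleting all entries equal to 1, then the two
GA1 positions have the same Grundy value. -/
theorem ga1_grundy_ignores_singleton_runs
    (g : List Bool → ℕ)
    (hg : ∀ b, g b = mex {m | ∃ b', ga1Move b b' ∧ m = g b'})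
    (b₁ b₂ : List Bool)
    (h : (runLengths b₁).filter (· ≠ 1) = (runLengths b₂).filter (· ≠ 1)) :
    g b₁ = g b₂ :=
  eq_of_mex_rec_of_bisimulation ga1Move_wellFounded hg (fun _ _ h ↦ h.symm)
    (fun _ _ _ ↦ exists_ga1Move_filter_runLengths_eq) h
end

section
/- Let H = (h_1,…,h_n) be an n-heap position in GA2 (each h_i a positive integer), and let t ∈ {0,1,2} be the smallest non-negative integer such that n + t ≡ 0 (mod 3). Then the Grundy value of H equals (t + h_1 + h_2 + … + h_n) mod 3. -/
/-- The moves of GA2 in heap form: positions are finite multisets of positive integers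
(heaps), and a move either replaces one heap by two positive integers summing to it,
replaces one heap by three positive integers summing to it, or simultaneously replaces two
heaps, each by two positive integers summing to it. -/
def ga2Move (H H' : Multiset ℕ) : Prop :=
  (∃ h a b : ℕ, h ∈ H ∧ 0 < a ∧ 0 < b ∧ a + b = h ∧
      H' = H.erase h + {a, b}) ∨
  (∃ h a b c : ℕ, h ∈ H ∧ 0 < a ∧ 0 < b ∧ 0 < c ∧ a + b + c = h ∧
      H' = H.erase h + {a, b, c}) ∨
  (∃ h k a b c d : ℕ, h ∈ H ∧ k ∈ H.erase h ∧
      0 < a ∧ 0 < b ∧ 0 < c ∧ 0 < d ∧ a + b = h ∧ c + d = k ∧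
      H' = (H.erase h).erase k + {a, b, c, d})

lemma mex_eq {S : Set ℕ} {v : ℕ} (h1 : v ∉ S) (h2 : ∀ m < v, m ∈ S) : mex S = v := by
  have hv : v ∈ {n : ℕ | n ∉ S} := h1
  refine le_antisymm (Nat.sInf_le hv) ?_
  by_contra hlt
  push_neg at hlt
  have hmem := Nat.sInf_mem (⟨v, hv⟩ : Set.Nonempty {n : ℕ | n ∉ S})
  exact hmem (h2 _ hlt)

lemma card_le_sum' {H : Multiset ℕ} (h : ∀ x ∈ H, 0 < x) : Multiset.card H ≤ H.sum := by
  induction H using Multiset.induction with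
  | empty => simp
  | cons a s ih =>
    simp only [Multiset.sum_cons, Multiset.card_cons]
    have h1 := h a (by simp)
    have h2 := ih (fun x hx => h x (by simp [hx]))
    omega

lemma sum_ones {H : Multiset ℕ} (h : ∀ x ∈ H, x = 1) : H.sum = Multiset.card H := by
  induction H using Multiset.induction with
  | empty => simp
  | cons a s ih =>
    simp only [Multiset.sum_cons, Multiset.card_cons]
    have h1 := h a (by simp)
    have h2 := ih (fun x hx => h x (by simp [hx]))
    omega

lemma stats1 {H : Multiset ℕ} {h a b : ℕ} (hh : h ∈ H) (hab : a + b = h) :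
    (H.erase h + ({a, b} : Multiset ℕ)).sum = H.sum ∧
    Multiset.card (H.erase h + ({a, b} : Multiset ℕ)) = Multiset.card H + 1 := by
  have hc := Multiset.cons_erase hh
  constructor
  · conv_rhs => rw [← hc]
    simp [Multiset.sum_cons]
    omega
  · conv_rhs => rw [← hc]
    simp

lemma stats2 {H : Multiset ℕ} {h a b c : ℕ} (hh : h ∈ H) (habc : a + b + c = h) :
    (H.erase h + ({a, b, c} : Multiset ℕ)).sum = H.sum ∧
    Multiset.card (H.erase h + ({a, b, c} : Multiset ℕ)) = Multiset.card H + 2 := by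
  have hc := Multiset.cons_erase hh
  constructor
  · conv_rhs => rw [← hc]
    simp [Multiset.sum_cons]
    omega
  · conv_rhs => rw [← hc]
    simp

lemma stats3 {H : Multiset ℕ} {h k a b c d : ℕ} (hh : h ∈ H) (hk : k ∈ H.erase h)
    (hab : a + b = h) (hcd : c + d = k) :
    ((H.erase h).erase k + ({a, b, c, d} : Multiset ℕ)).sum = H.sum ∧
    Multiset.card ((H.erase h).erase k + ({a, b, c, d} : Multiset ℕ)) = Multiset.card H + 2 := by
  have hc1 := Multiset.cons_erase hh
  have hc2 := Multiset.cons_erase hk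
  constructor
  · conv_rhs => rw [← hc1]
    rw [← hc2]
    simp [Multiset.sum_cons]
    omega
  · conv_rhs => rw [← hc1]
    rw [← hc2]
    simp

lemma pos_move {H H' : Multiset ℕ} (hH : ∀ x ∈ H, 0 < x) (hm : ga2Move H H') :
    ∀ x ∈ H', 0 < x := by
  rcases hm with ⟨h, a, b, hh, ha, hb, hab, rfl⟩ |
    ⟨h, a, b, c, hh, ha, hb, hc, habc, rfl⟩ |
    ⟨h, k, a, b, c, d, hh, hk, ha, hb, hc, hd, hab, hcd, rfl⟩ <;>
  · intro x hx
    rw [Multiset.mem_add] at hx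
    rcases hx with hx | hx
    · exact hH x (Multiset.mem_of_mem_erase (by first
        | exact hx
        | exact Multiset.mem_of_mem_erase hx))
    · simp at hx
      omega

lemma move_stats {H H' : Multiset ℕ} (hm : ga2Move H H') :
    H'.sum = H.sum ∧ (Multiset.card H' = Multiset.card H + 1 ∨
      Multiset.card H' = Multiset.card H + 2) := by
  rcases hm with ⟨h, a, b, hh, ha, hb, hab, rfl⟩ |
    ⟨h, a, b, c, hh, ha, hb, hc, habc, rfl⟩ |
    ⟨h, k, a, b, c, d, hh, hk, ha, hb, hc, hd, hab, hcd, rfl⟩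
  · exact ⟨(stats1 hh hab).1, Or.inl (stats1 hh hab).2⟩
  · exact ⟨(stats2 hh habc).1, Or.inr (stats2 hh habc).2⟩
  · exact ⟨(stats3 hh hk hab hcd).1, Or.inr (stats3 hh hk hab hcd).2⟩

lemma terminal (g : Multiset ℕ → ℕ)
    (hg : ∀ H, g H = mex {m | ∃ H', ga2Move H H' ∧ m = g H'})
    (H : Multiset ℕ) (hone : ∀ x ∈ H, x = 1) :
    g H = (H.sum + 2 * Multiset.card H) % 3 := by
  have hs : H.sum = Multiset.card H := sum_ones hone
  have hz : (H.sum + 2 * Multiset.card H) % 3 = 0 := by omega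
  rw [hg H, hz]
  apply mex_eq
  · rintro ⟨H', hm, -⟩
    rcases hm with ⟨h, a, b, hh, ha, hb, hab, -⟩ |
      ⟨h, a, b, c, hh, ha, hb, hc, habc, -⟩ |
      ⟨h, k, a, b, c, d, hh, hk, ha, hb, hc, hd, hab, hcd, -⟩
    · have := hone h hh; omega
    · have := hone h hh; omega
    · have := hone h hh; omega
  · intro m hm; omega

lemma ga2_main (g : Multiset ℕ → ℕ)
    (hg : ∀ H, g H = mex {m | ∃ H', ga2Move H H' ∧ m = g H'}) :
    ∀ (n : ℕ) (H : Multiset ℕ), (∀ x ∈ H, 0 < x) → H.sum ≤ Multiset.card H + n →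
      g H = (H.sum + 2 * Multiset.card H) % 3 := by
  intro n
  induction n with
  | zero =>
    intro H hpos hle
    apply terminal g hg
    intro x hx
    by_contra hne
    have h2 : 2 ≤ x := by have := hpos x hx; omega
    have hc := Multiset.cons_erase hx
    have hE : Multiset.card (H.erase x) ≤ (H.erase x).sum :=
      card_le_sum' (fun y hy => hpos y (Multiset.mem_of_mem_erase hy))
    have hs : H.sum = x + (H.erase x).sum := by
      conv_lhs => rw [← hc]
      exact Multiset.sum_cons x _
    have hcd : Multiset.card H = Multiset.card (H.erase x) + 1 := by
      conv_lhs => rw [← hc]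
      simp
    omega
  | succ n ih =>
    intro H hpos hle
    by_cases hone : ∀ x ∈ H, x = 1
    · exact terminal g hg H hone
    · push_neg at hone
      obtain ⟨h0, hh0, hne0⟩ := hone
      have h02 : 2 ≤ h0 := by have := hpos h0 hh0; omega
      -- key: every option's grundy value
      have key : ∀ H', ga2Move H H' → g H' = (H'.sum + 2 * Multiset.card H') % 3 ∧
          H'.sum = H.sum ∧ (Multiset.card H' = Multiset.card H + 1 ∨
            Multiset.card H' = Multiset.card H + 2) := by
        intro H' hm
        have hst := move_stats hm
        refine ⟨ih H' (pos_move hpos hm) ?_, hst⟩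
        omega
      -- witness 1: split h0 into two
      set H1 := H.erase h0 + ({1, h0 - 1} : Multiset ℕ) with hH1
      have hm1 : ga2Move H H1 := Or.inl ⟨h0, 1, h0 - 1, hh0, by omega, by omega, by omega, rfl⟩
      have hs1 := stats1 hh0 (show 1 + (h0 - 1) = h0 by omega)
      have hg1 : g H1 = (H.sum + 2 * (Multiset.card H + 1)) % 3 := by
        have := (key H1 hm1).1
        rw [this, hs1.1, hs1.2]
      rw [hg H]
      by_cases hC : (∃ h ∈ H, 3 ≤ h) ∨ (∃ h ∈ H, ∃ k ∈ H.erase h, 2 ≤ h ∧ 2 ≤ k)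
      · -- two distinct option values exist
        have hwit2 : ∃ H2, ga2Move H H2 ∧ g H2 = (H.sum + 2 * (Multiset.card H + 2)) % 3 := by
          rcases hC with ⟨h, hh, h3⟩ | ⟨h, hh, k, hk, h2h, h2k⟩
          · refine ⟨H.erase h + ({1, 1, h - 2} : Multiset ℕ), Or.inr (Or.inl
              ⟨h, 1, 1, h - 2, hh, by omega, by omega, by omega, by omega, rfl⟩), ?_⟩
            have hs2 := stats2 hh (show 1 + 1 + (h - 2) = h by omega)
            have := (key _ (Or.inr (Or.inl
              ⟨h, 1, 1, h - 2, hh, by omega, by omega, by omega, by omega, rfl⟩))).1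
            rw [this, hs2.1, hs2.2]
          · refine ⟨(H.erase h).erase k + ({1, h - 1, 1, k - 1} : Multiset ℕ), Or.inr (Or.inr
              ⟨h, k, 1, h - 1, 1, k - 1, hh, hk, by omega, by omega, by omega, by omega,
                by omega, by omega, rfl⟩), ?_⟩
            have hs3 := stats3 hh hk (show 1 + (h - 1) = h by omega)
              (show 1 + (k - 1) = k by omega)
            have := (key _ (Or.inr (Or.inr
              ⟨h, k, 1, h - 1, 1, k - 1, hh, hk, by omega, by omega, by omega, by omega,
                by omega, by omega, rfl⟩))).1
            rw [this, hs3.1, hs3.2]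
        obtain ⟨H2, hm2, hg2⟩ := hwit2
        apply mex_eq
        · rintro ⟨H', hm, heq⟩
          obtain ⟨hgv, hsv, hcv⟩ := key H' hm
          omega
        · intro m hmlt
          by_cases hcase : m = (H.sum + 2 * (Multiset.card H + 1)) % 3
          · exact ⟨H1, hm1, by omega⟩
          · exact ⟨H2, hm2, by omega⟩
      · -- only type-1 moves; moreover sum = card + 1
        push_neg at hC
        obtain ⟨hC1, hC2⟩ := hC
        have h0eq : h0 = 2 := by have := hC1 h0 hh0; omega
        have hsumcard : H.sum = Multiset.card H + 1 := by
          have hc := Multiset.cons_erase hh0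
          have hE : (H.erase h0).sum = Multiset.card (H.erase h0) := by
            apply sum_ones
            intro k hk
            have hk2 := hC2 h0 hh0 k hk (by omega)
            have := hpos k (Multiset.mem_of_mem_erase hk)
            omega
          have hs : H.sum = h0 + (H.erase h0).sum := by
            conv_lhs => rw [← hc]
            exact Multiset.sum_cons h0 _
          have hcd : Multiset.card H = Multiset.card (H.erase h0) + 1 := by
            conv_lhs => rw [← hc]
            simp
          omega
        apply mex_eq
        · rintro ⟨H', hm, heq⟩
          rcases hm with ⟨h, a, b, hh, ha, hb, hab, rfl⟩ |
            ⟨h, a, b, c, hh, ha, hb, hc, habc, -⟩ |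
            ⟨h, k, a, b, c, d, hh, hk, ha, hb, hc, hd, hab, hcd, -⟩
          · have hs1' := stats1 hh hab
            have := (key _ (Or.inl ⟨h, a, b, hh, ha, hb, hab, rfl⟩)).1
            rw [this, hs1'.1, hs1'.2] at heq
            omega
          · have := hC1 h hh; omega
          · have := hC2 h hh k hk (by omega); omega
        · intro m hmlt
          exact ⟨H1, hm1, by omega⟩

/-- Let `H` be an `n`-heap position in GA2 (each heap a positive integer), and
let `t` be the smallest non-negative integer such that `n + t ≡ 0 (mod 3)`. Then the Grundy
value of `H` equals `(t + h₁ + ⋯ + hₙ) mod 3`. Here `g` is the GA2 Grundy function,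
characterized by the mex recurrence over the moves. -/
theorem ga2_grundy
    (g : Multiset ℕ → ℕ)
    (hg : ∀ H, g H = mex {m | ∃ H', ga2Move H H' ∧ m = g H'})
    (H : Multiset ℕ) (hH : ∀ x ∈ H, 0 < x)
    (t : ℕ) (ht : (Multiset.card H + t) % 3 = 0)
    (htmin : ∀ s : ℕ, (Multiset.card H + s) % 3 = 0 → t ≤ s) :
    g H = (t + H.sum) % 3 := by
  have h3 := ga2_main g hg H.sum H hH (by omega)
  have ht3 : t < 3 := by
    have := htmin (t % 3) (by omega)
    omega
  rw [h3]
  omega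
end

section
/- In GA2, a single-heap position consisting of one heap of size h ≥ 1 has Grundy value (h − 1) mod 3. -/
lemma aux_mod (a u : ℕ) (ha : 2 ≤ a) (hu : u < a % 3) :
    u = (a - 1) % 3 ∨ u = (a - 2) % 3 := by omega

lemma mex_eq_of (S : Set ℕ) (v : ℕ) (h1 : v ∉ S) (h2 : ∀ u < v, u ∈ S) : mex S = v := by
  unfold mex
  refine le_antisymm (Nat.sInf_le h1) ?_
  by_contra hlt
  push_neg at hlt
  have hmem : sInf {n | n ∉ S} ∈ {n | n ∉ S} := Nat.sInf_mem ⟨v, h1⟩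
  exact hmem (h2 _ hlt)

lemma card_le_sum_of_pos (H : Multiset ℕ) (hpos : ∀ x ∈ H, 0 < x) :
    Multiset.card H ≤ H.sum := by
  induction H using Multiset.induction with
  | empty => simp
  | cons a s ih =>
    simp only [Multiset.card_cons, Multiset.sum_cons]
    have h1 := hpos a (by simp)
    have h2 := ih (fun x hx => hpos x (by simp [hx]))
    omega

lemma sum_eq_card_of_ones (H : Multiset ℕ) (h1 : ∀ x ∈ H, x = 1) :
    H.sum = Multiset.card H := by
  induction H using Multiset.induction with
  | empty => simp
  | cons a s ih =>
    simp only [Multiset.card_cons, Multiset.sum_cons]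
    have := h1 a (by simp)
    have := ih (fun x hx => h1 x (by simp [hx]))
    omega

lemma move_analysis {H H' : Multiset ℕ} (hpos : ∀ x ∈ H, 0 < x) (hm : ga2Move H H') :
    (∀ x ∈ H', 0 < x) ∧ H'.sum = H.sum ∧
      (Multiset.card H' = Multiset.card H + 1 ∨ Multiset.card H' = Multiset.card H + 2) := by
  rcases hm with ⟨h, a, b, hh, ha, hb, hab, hH'⟩ |
    ⟨h, a, b, c, hh, ha, hb, hc, habc, hH'⟩ |
    ⟨h, k, a, b, c, d, hh, hk, ha, hb, hc, hd, hab, hcd, hH'⟩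
  · subst hH'
    have hce := Multiset.cons_erase hh
    have hsum : H.sum = h + (H.erase h).sum := by rw [← hce]; simp
    have hcard : Multiset.card H = Multiset.card (H.erase h) + 1 := by
      rw [← hce]; simp
    refine ⟨?_, ?_, ?_⟩
    · intro x hx
      rcases Multiset.mem_add.1 hx with hx | hx
      · exact hpos x (Multiset.mem_of_mem_erase hx)
      · simp only [Multiset.insert_eq_cons, Multiset.mem_cons, Multiset.mem_singleton] at hx
        rcases hx with rfl | rfl <;> assumption
    · simp only [Multiset.sum_add]
      have : ({a, b} : Multiset ℕ).sum = a + b := by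
        simp [Multiset.insert_eq_cons]
      omega
    · left
      simp only [Multiset.card_add]
      have : Multiset.card ({a, b} : Multiset ℕ) = 2 := by
        simp [Multiset.insert_eq_cons]
      omega
  · subst hH'
    have hce := Multiset.cons_erase hh
    have hsum : H.sum = h + (H.erase h).sum := by rw [← hce]; simp
    have hcard : Multiset.card H = Multiset.card (H.erase h) + 1 := by
      rw [← hce]; simp
    refine ⟨?_, ?_, ?_⟩
    · intro x hx
      rcases Multiset.mem_add.1 hx with hx | hx
      · exact hpos x (Multiset.mem_of_mem_erase hx)
      · simp only [Multiset.insert_eq_cons, Multiset.mem_cons, Multiset.mem_singleton] at hx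
        rcases hx with rfl | rfl | rfl <;> assumption
    · simp only [Multiset.sum_add]
      have : ({a, b, c} : Multiset ℕ).sum = a + b + c := by
        simp [Multiset.insert_eq_cons]; ring
      omega
    · right
      simp only [Multiset.card_add]
      have : Multiset.card ({a, b, c} : Multiset ℕ) = 3 := by
        simp [Multiset.insert_eq_cons]
      omega
  · subst hH'
    have hce := Multiset.cons_erase hh
    have hce2 := Multiset.cons_erase hk
    have hsum2 : (H.erase h).sum = k + ((H.erase h).erase k).sum := by rw [← hce2]; simp
    have hsum : H.sum = h + (H.erase h).sum := by rw [← hce]; simp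
    have hcard2 : Multiset.card (H.erase h) = Multiset.card ((H.erase h).erase k) + 1 := by
      rw [← hce2]; simp
    have hcard : Multiset.card H = Multiset.card (H.erase h) + 1 := by
      rw [← hce]; simp
    refine ⟨?_, ?_, ?_⟩
    · intro x hx
      rcases Multiset.mem_add.1 hx with hx | hx
      · exact hpos x (Multiset.mem_of_mem_erase (Multiset.mem_of_mem_erase hx))
      · simp only [Multiset.insert_eq_cons, Multiset.mem_cons, Multiset.mem_singleton] at hx
        rcases hx with rfl | rfl | rfl | rfl <;> assumption
    · simp only [Multiset.sum_add]
      have : ({a, b, c, d} : Multiset ℕ).sum = a + b + c + d := by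
        simp [Multiset.insert_eq_cons]; ring
      omega
    · right
      simp only [Multiset.card_add]
      have : Multiset.card ({a, b, c, d} : Multiset ℕ) = 4 := by
        simp [Multiset.insert_eq_cons]
      omega

lemma ga2_grundy_main (g : Multiset ℕ → ℕ)
    (hg : ∀ H, g H = mex {m | ∃ H', ga2Move H H' ∧ m = g H'}) :
    ∀ N H, H.sum - Multiset.card H = N → (∀ x ∈ H, 0 < x) →
      g H = (H.sum - Multiset.card H) % 3 := by
  intro N
  induction N using Nat.strong_induction_on with
  | _ N ih =>
  intro H hN hpos
  set s := H.sum with hs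
  set n := Multiset.card H with hn
  have hns : n ≤ s := card_le_sum_of_pos H hpos
  set S : Set ℕ := {m | ∃ H', ga2Move H H' ∧ m = g H'} with hS
  -- key : every option's grundy value
  have key : ∀ H', ga2Move H H' →
      g H' = (s - Multiset.card H') % 3 ∧
      (Multiset.card H' = n + 1 ∨ Multiset.card H' = n + 2) ∧ Multiset.card H' ≤ s := by
    intro H' hm
    obtain ⟨hpos', hsum', hcard'⟩ := move_analysis hpos hm
    have hle' : Multiset.card H' ≤ H'.sum := card_le_sum_of_pos H' hpos'
    rw [hsum'] at hle'
    have hlt : H'.sum - Multiset.card H' < N := by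
      rw [hsum', ← hN]
      omega
    have := ih _ hlt H' rfl hpos'
    rw [hsum'] at this
    exact ⟨this, hcard', hle'⟩
  have hvnotin : (s - n) % 3 ∉ S := by
    rintro ⟨H', hm, hval⟩
    obtain ⟨hgv, hc, hcs⟩ := key H' hm
    rw [hgv] at hval
    omega
  rw [hg H, ← hS]
  by_cases h2 : ∃ h ∈ H, 2 ≤ h
  · obtain ⟨h, hh, hh2⟩ := h2
    -- the split-into-two move always available
    have hmove1 : ga2Move H (H.erase h + {1, h - 1}) := by
      left; exact ⟨h, 1, h - 1, hh, by omega, by omega, by omega, rfl⟩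
    have hm1card : Multiset.card (H.erase h + {1, h - 1}) = n + 1 := by
      obtain ⟨_, hc, _⟩ := key _ hmove1
      rcases hc with hc | hc
      · exact hc
      · exfalso
        have hcard : Multiset.card H = Multiset.card (H.erase h) + 1 := by
          rw [← Multiset.cons_erase hh]; simp
        have : Multiset.card ({1, h - 1} : Multiset ℕ) = 2 := by
          simp [Multiset.insert_eq_cons]
        simp only [Multiset.card_add] at hc
        omega
    have hm1 : (s - (n + 1)) % 3 ∈ S := by
      refine ⟨_, hmove1, ?_⟩
      obtain ⟨hgv, _, _⟩ := key _ hmove1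
      rw [hgv, hm1card]
    have hn1s : n + 1 ≤ s := by
      obtain ⟨_, _, hcs⟩ := key _ hmove1
      rw [hm1card] at hcs; exact hcs
    by_cases h3 : (∃ h ∈ H, 3 ≤ h) ∨ (∃ h k, h ∈ H ∧ k ∈ H.erase h ∧ 2 ≤ h ∧ 2 ≤ k)
    · -- there is a move increasing card by 2
      have hm2 : ∃ H', ga2Move H H' ∧ Multiset.card H' = n + 2 := by
        rcases h3 with ⟨h', hh', hh3⟩ | ⟨h', k', hh', hk', hh2', hk2'⟩
        · refine ⟨H.erase h' + {1, 1, h' - 2}, ?_, ?_⟩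
          · right; left
            exact ⟨h', 1, 1, h' - 2, hh', by omega, by omega, by omega, by omega, rfl⟩
          · have hcard : Multiset.card H = Multiset.card (H.erase h') + 1 := by
              rw [← Multiset.cons_erase hh']; simp
            have : Multiset.card ({1, 1, h' - 2} : Multiset ℕ) = 3 := by
              simp [Multiset.insert_eq_cons]
            simp only [Multiset.card_add]
            omega
        · refine ⟨(H.erase h').erase k' + {1, h' - 1, 1, k' - 1}, ?_, ?_⟩
          · right; right
            exact ⟨h', k', 1, h' - 1, 1, k' - 1, hh', hk', by omega, by omega, by omega,
              by omega, by omega, by omega, rfl⟩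
          · have hcard2 : Multiset.card (H.erase h') = Multiset.card ((H.erase h').erase k') + 1 := by
              rw [← Multiset.cons_erase hk']; simp
            have hcard : Multiset.card H = Multiset.card (H.erase h') + 1 := by
              rw [← Multiset.cons_erase hh']; simp
            have : Multiset.card ({1, h' - 1, 1, k' - 1} : Multiset ℕ) = 4 := by
              simp [Multiset.insert_eq_cons]
            simp only [Multiset.card_add]
            omega
      obtain ⟨H2, hmove2, hc2⟩ := hm2
      have hn2s : n + 2 ≤ s := by
        obtain ⟨_, _, hcs⟩ := key _ hmove2
        rw [hc2] at hcs; exact hcs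
      have hm2mem : (s - (n + 2)) % 3 ∈ S := by
        refine ⟨_, hmove2, ?_⟩
        obtain ⟨hgv, _, _⟩ := key _ hmove2
        rw [hgv, hc2]
      apply mex_eq_of _ _ hvnotin
      intro u hu
      have e1 : s - (n + 1) = (s - n) - 1 := by omega
      have e2 : s - (n + 2) = (s - n) - 2 := by omega
      have hu1 := aux_mod (s - n) u (by omega) hu
      rw [← e1, ← e2] at hu1
      rcases hu1 with rfl | rfl
      · exact hm1
      · exact hm2mem
    · -- exactly one heap ≥ 2 and it equals 2 : s = n + 1
      push_neg at h3
      obtain ⟨h3a, h3b⟩ := h3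
      have hh2' : h = 2 := by
        have := h3a h hh
        omega
      subst hh2'
      have hones : ∀ x ∈ H.erase 2, x = 1 := by
        intro x hx
        have hxH : x ∈ H := Multiset.mem_of_mem_erase hx
        have h1 := hpos x hxH
        have h2' := h3a x hxH
        by_contra hne
        have hx2 : x = 2 := by omega
        subst hx2
        exact absurd (h3b 2 2 hh hx (by omega)) (by omega)
      have hsn : s = n + 1 := by
        have hce := Multiset.cons_erase hh
        have hsum : H.sum = 2 + (H.erase 2).sum := by rw [← hce]; simp
        have hcard : Multiset.card H = Multiset.card (H.erase 2) + 1 := by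
          rw [← hce]; simp
        have := sum_eq_card_of_ones _ hones
        omega
      apply mex_eq_of _ _ hvnotin
      intro u hu
      have hv1 : (s - n) % 3 = 1 := by omega
      have hu0 : u = 0 := by omega
      subst hu0
      have : (s - (n + 1)) % 3 = 0 := by omega
      rw [← this]
      exact hm1
  · -- all heaps are 1 : no moves, value 0
    push_neg at h2
    have hones : ∀ x ∈ H, x = 1 := by
      intro x hx
      have := hpos x hx
      have := h2 x hx
      omega
    have hsn : s = n := sum_eq_card_of_ones H hones
    have hempty : ∀ m, m ∉ S := by
      rintro m ⟨H', hm, _⟩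
      rcases hm with ⟨h, a, b, hh, ha, hb, hab, _⟩ |
        ⟨h, a, b, c, hh, ha, hb, hc, habc, _⟩ |
        ⟨h, k, a, b, c, d, hh, hk, ha, hb, hc, hd, hab, _, _⟩
      · have := hones h hh; omega
      · have := hones h hh; omega
      · have := hones h hh; omega
    apply mex_eq_of _ _ (hempty _)
    intro u hu
    omega

/-- In GA2, a single-heap position consisting of one heap of size `h ≥ 1` has
Grundy value `(h - 1) mod 3`. -/
theorem ga2_grundy_one_heap
    (g : Multiset ℕ → ℕ)
    (hg : ∀ H, g H = mex {m | ∃ H', ga2Move H H' ∧ m = g H'})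
    (h : ℕ) (hh : 1 ≤ h) :
    g ({h} : Multiset ℕ) = (h - 1) % 3 := by
  have := ga2_grundy_main g hg (({h} : Multiset ℕ).sum - Multiset.card {h}) {h} rfl
    (by intro x hx; simp at hx; omega)
  simpa using this
end

section
/- For every k ≥ 1, the Arc Kayles position on the graph G⁺(2k), consisting of the 2×(2k) grid graph with one pendant edge attached at each of its four corner vertices, has Grundy value 0. -/
/-- The moves of Arc Kayles on a simple graph: choose an edge `uv` and remove it together
with every edge sharing an endpoint with it. -/
def arcKaylesMove {V : Type} (G G' : SimpleGraph V) : Prop :=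
  ∃ u v : V, G.Adj u v ∧
    ∀ x y : V, G'.Adj x y ↔ (G.Adj x y ∧ x ≠ u ∧ x ≠ v ∧ y ≠ u ∧ y ≠ v)

/-- The 2×n grid graph: vertices `Fin 2 × Fin n`, adjacent when they differ by 1 in exactly
one coordinate. -/
def grid2 (n : ℕ) : SimpleGraph (Fin 2 × Fin n) :=
  (SimpleGraph.pathGraph 2).boxProd (SimpleGraph.pathGraph n)

/-- The four corner vertices of the 2×(m+1) grid graph: (row 1, col 1), (row 2, col 1),
(row 1, col m+1), (row 2, col m+1). -/
def corner (m : ℕ) : Fin 4 → Fin 2 × Fin (m + 1) :=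
  ![(0, 0), (1, 0), (0, Fin.last m), (1, Fin.last m)]

/-- The 2×(m+1) grid graph with `p` pendant vertices, pendant vertex `j` being attached at
the corner `corner m (c j)`.  With `p = 3` and `c` injective this is `G(m+1)` (a pendant
edge at each of three of the four corners); with `p = 4` and `c` injective it is `G⁺(m+1)`
(a pendant edge at each of the four corners). -/
def gridCorners (m p : ℕ) (c : Fin p → Fin 4) :
    SimpleGraph ((Fin 2 × Fin (m + 1)) ⊕ Fin p) :=
  SimpleGraph.fromRel fun x y =>
    match x, y with
    | Sum.inl a, Sum.inl b => (grid2 (m + 1)).Adj a b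
    | Sum.inl a, Sum.inr j => corner m (c j) = a
    | _, _ => False

/-!
The point reflection `σ : (r, j) ↦ (1 - r, 2k - 1 - j)` of the 2×2k grid, extended to the
pendant vertices, is a fixed-point-free automorphism of `G⁺(2k)` that maps no vertex to a
neighbour (with an odd number of columns the middle rung would be such an edge). The second
player answers every move `uv` with its mirror image `σu σv`: these four vertices are distinct,
so the reply is still playable, and the resulting position has the same symmetry. By induction
on the position, the second player wins.
-/

open Function SimpleGraph

lemma mex_eq_zero_iff {S : Set ℕ} (hS : S.Finite) : mex S = 0 ↔ 0 ∉ S := by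
  rw [mex, Nat.sInf_eq_zero]
  exact or_iff_left hS.infinite_compl.nonempty.ne_empty

section ArcKayles

variable {V W : Type}

def arcKaylesPlay (G : SimpleGraph V) (u v : V) : SimpleGraph V where
  Adj x y := G.Adj x y ∧ x ≠ u ∧ x ≠ v ∧ y ≠ u ∧ y ≠ v
  symm := ⟨fun _ _ ⟨h, hxu, hxv, hyu, hyv⟩ => ⟨h.symm, hyu, hyv, hxu, hxv⟩⟩
  loopless := ⟨fun _ ⟨h, _⟩ => G.irrefl h⟩

@[simp]
lemma arcKaylesPlay_adj {G : SimpleGraph V} {u v x y : V} :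
    (arcKaylesPlay G u v).Adj x y ↔ G.Adj x y ∧ x ≠ u ∧ x ≠ v ∧ y ≠ u ∧ y ≠ v :=
  Iff.rfl

lemma arcKaylesMove_iff {G G' : SimpleGraph V} :
    arcKaylesMove G G' ↔ ∃ u v, G.Adj u v ∧ G' = arcKaylesPlay G u v := by
  refine exists₂_congr fun u v => and_congr_right fun _ => ?_
  simp only [SimpleGraph.ext_iff, funext_iff, eq_iff_iff, arcKaylesPlay_adj]

lemma arcKaylesPlay_lt {G : SimpleGraph V} {u v : V} (h : G.Adj u v) :
    arcKaylesPlay G u v < G :=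
  lt_of_le_not_ge (fun _ _ hxy => hxy.1) fun hle => (hle h).2.1 rfl

lemma arcKaylesPlay_comm (G : SimpleGraph V) (a b c d : V) :
    arcKaylesPlay (arcKaylesPlay G a b) c d = arcKaylesPlay (arcKaylesPlay G c d) a b := by
  ext x y
  simp only [arcKaylesPlay_adj]
  tauto

lemma arcKaylesPlay_comap (e : V ≃ W) (G : SimpleGraph W) (u v : W) :
    (arcKaylesPlay G u v).comap e = arcKaylesPlay (G.comap e) (e.symm u) (e.symm v) := by
  ext x y
  simp only [comap_adj, arcKaylesPlay_adj, ne_eq, ← e.eq_symm_apply]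

theorem grundy_eq_zero_of_involution [Finite V] {g : SimpleGraph V → ℕ}
    (hg : ∀ G, g G = mex {x | ∃ G', arcKaylesMove G G' ∧ x = g G'})
    {σ : V → V} (hσ : Involutive σ) (hfix : ∀ u, σ u ≠ u) (G : SimpleGraph V)
    (hsymm : G.comap σ = G) (hσadj : ∀ u, ¬ G.Adj u (σ u)) : g G = 0 := by
  have hopts : ∀ G, {x | ∃ G', arcKaylesMove G G' ∧ x = g G'}.Finite := fun G =>
    (Set.finite_range g).subset fun _ ⟨G', _, hx⟩ => ⟨G', hx.symm⟩
  induction G using WellFoundedLT.induction with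
  | _ G ih =>
  rw [hg, mex_eq_zero_iff (hopts G)]
  rintro ⟨_, hmove, hzero⟩
  obtain ⟨u, v, huv, rfl⟩ := arcKaylesMove_iff.1 hmove
  have hσuv : G.Adj (σ u) (σ v) := by rwa [← hsymm] at huv
  have hσu_v : σ u ≠ v := fun h => hσadj u (h ▸ huv)
  have hσv_u : σ v ≠ u := fun h => hσu_v (h ▸ hσ v)
  have hreply : (arcKaylesPlay G u v).Adj (σ u) (σ v) :=
    ⟨hσuv, hfix u, hσu_v, hσv_u, hfix v⟩
  set H := arcKaylesPlay (arcKaylesPlay G u v) (σ u) (σ v)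
  have hHsymm : H.comap σ = H := by
    have hperm := arcKaylesPlay_comap (hσ.toPerm σ)
    simp only [Involutive.coe_toPerm, Involutive.toPerm_symm] at hperm
    rw [hperm, hperm, hsymm, hσ, hσ, arcKaylesPlay_comm]
  have hHlt : H < G := (arcKaylesPlay_lt hreply).trans (arcKaylesPlay_lt huv)
  have hH : g H = 0 := ih H hHlt hHsymm fun w hw => hσadj w (hHlt.le hw)
  rw [eq_comm, hg, mex_eq_zero_iff (hopts _)] at hzero
  exact hzero ⟨H, arcKaylesMove_iff.2 ⟨_, _, hreply, rfl⟩, hH.symm⟩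

end ArcKayles

section Grid

lemma grid2_adj_rev {n : ℕ} {x y : Fin 2 × Fin n} :
    (grid2 n).Adj (Prod.map Fin.rev Fin.rev x) (Prod.map Fin.rev Fin.rev y) ↔
      (grid2 n).Adj x y := by
  obtain ⟨⟨a, b⟩, ⟨c, d⟩⟩ := (x, y)
  have := a.isLt; have := b.isLt; have := c.isLt; have := d.isLt
  simp only [grid2, Prod.map, boxProd_adj, pathGraph_adj, Fin.ext_iff, Fin.val_rev]
  omega

lemma grid2_not_adj_rev {n : ℕ} (hn : Even n) (x : Fin 2 × Fin n) :
    ¬ (grid2 n).Adj x (Prod.map Fin.rev Fin.rev x) := by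
  obtain ⟨a, b⟩ := x
  obtain ⟨l, rfl⟩ := hn
  have := a.isLt; have := b.isLt
  simp only [grid2, Prod.map, boxProd_adj, pathGraph_adj, Fin.ext_iff, Fin.val_rev]
  omega

lemma corner_rev (m : ℕ) (j : Fin 4) :
    corner m j.rev = Prod.map Fin.rev Fin.rev (corner m j) := by
  fin_cases j <;> simp [corner]

section

variable {m p : ℕ} {c : Fin p → Fin 4}

@[simp]
lemma gridCorners_adj_inl_inl {a b : Fin 2 × Fin (m + 1)} :
    (gridCorners m p c).Adj (.inl a) (.inl b) ↔ (grid2 (m + 1)).Adj a b := by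
  simp only [gridCorners, fromRel_adj, ne_eq, Sum.inl.injEq]
  exact ⟨fun ⟨_, h⟩ => h.elim id Adj.symm, fun h => ⟨h.ne, .inl h⟩⟩

@[simp]
lemma gridCorners_adj_inl_inr {a : Fin 2 × Fin (m + 1)} {j : Fin p} :
    (gridCorners m p c).Adj (.inl a) (.inr j) ↔ corner m (c j) = a := by
  simp [gridCorners]

@[simp]
lemma gridCorners_adj_inr_inl {a : Fin 2 × Fin (m + 1)} {j : Fin p} :
    (gridCorners m p c).Adj (.inr j) (.inl a) ↔ corner m (c j) = a := by
  rw [adj_comm, gridCorners_adj_inl_inr]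

@[simp]
lemma gridCorners_not_adj_inr_inr {i j : Fin p} :
    ¬ (gridCorners m p c).Adj (.inr i) (.inr j) := by
  simp [gridCorners]

end

def gridReflection (m : ℕ) :
    (Fin 2 × Fin (m + 1)) ⊕ Fin 4 → (Fin 2 × Fin (m + 1)) ⊕ Fin 4 :=
  Sum.map (Prod.map Fin.rev Fin.rev) Fin.rev

lemma gridReflection_involutive (m : ℕ) : Involutive (gridReflection m) := by
  rintro (⟨r, j⟩ | j) <;> simp [gridReflection]

lemma gridReflection_ne_self {m : ℕ} (x : (Fin 2 × Fin (m + 1)) ⊕ Fin 4) :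
    gridReflection m x ≠ x := by
  rcases x with ⟨r, j⟩ | j
  · simp only [gridReflection, Sum.map_inl, ne_eq, Sum.inl.injEq, Prod.map, Prod.mk.injEq,
      Fin.rev_eq_iff]
    fin_cases r <;> simp
  · simp only [gridReflection, Sum.map_inr, ne_eq, Sum.inr.injEq]
    fin_cases j <;> decide

lemma gridCorners_comap_gridReflection (m : ℕ) :
    (gridCorners m 4 fun j => j).comap (gridReflection m) = gridCorners m 4 fun j => j := by
  have hrev : Injective (Prod.map Fin.rev Fin.rev : Fin 2 × Fin (m + 1) → _) :=
    Fin.rev_injective.prodMap Fin.rev_injective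
  ext (a | i) (b | j) <;>
    simp only [comap_adj, gridReflection, Sum.map_inl, Sum.map_inr, gridCorners_adj_inl_inl,
      gridCorners_adj_inl_inr, gridCorners_adj_inr_inl, gridCorners_not_adj_inr_inr, grid2_adj_rev,
      corner_rev, hrev.eq_iff]

lemma gridCorners_not_adj_gridReflection {m : ℕ} {c : Fin 4 → Fin 4} (hm : Odd m)
    (x : (Fin 2 × Fin (m + 1)) ⊕ Fin 4) : ¬ (gridCorners m 4 c).Adj x (gridReflection m x) := by
  rcases x with a | j
  · simpa [gridReflection] using grid2_not_adj_rev hm.add_one a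
  · simp [gridReflection]

end Grid

/-- For every `k ≥ 1`, the Arc Kayles position on `G⁺(2k)`, the 2×(2k) grid
graph with one pendant edge attached at each of its four corner vertices, has Grundy
value 0.  (Here `2·k - 1 + 1 = 2·k` is the number of columns.) -/
theorem arc_kayles_Gplus_even (k : ℕ) (hk : 1 ≤ k)
    (gAK : ∀ (V : Type), Fintype V → SimpleGraph V → ℕ)
    (hAK : ∀ (V : Type) (hV : Fintype V) (G : SimpleGraph V),
      gAK V hV G = mex {x | ∃ G', arcKaylesMove G G' ∧ x = gAK V hV G'}) :
    gAK ((Fin 2 × Fin (2 * k - 1 + 1)) ⊕ Fin 4) inferInstance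
      (gridCorners (2 * k - 1) 4 (fun j => j)) = 0 := by
  have hodd : Odd (2 * k - 1) := ⟨k - 1, by omega⟩
  exact grundy_eq_zero_of_involution (hAK _ _) (gridReflection_involutive _)
    gridReflection_ne_self _ (gridCorners_comap_gridReflection _)
    (gridCorners_not_adj_gridReflection hodd)
end
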